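/- arXiv:1812.02928 — 2 statements merged into one kernel-verified Lean document; each statement's English description precedes it below -/
import Mathlib

section
/- Consider x(t+1) = x(t) + B u(t) (A = I_n) with quadratic stage cost ℓ(x,u) = xᵀQx + uᵀRu + qᵀx + rᵀu, Q symmetric. If the rotated stage cost ℓ̃(x,u) = ℓ(x,u) − ℓ(x_s,u_s) + λ(x) − λ(x + Bu) with quadratic storage λ(x) = xᵀPx + pᵀx satisfies ℓ̃(x, u_s) ≥ α(‖x − x_s‖) for some class-K∞ function α and for all x in a set with nonempty interior containing x_s in its interior, then necessarily Q ≻ 0. -/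
open Matrix

/-- For the integrator with quadratic stage cost and quadratic
storage, if the rotated stage cost with `u = u_s` admits a class-K∞ lower bound
in `‖x − x_s‖` on a set containing `x_s` in its interior, then `Q ≻ 0`. -/
theorem rotated_cost_lower_bound_implies_Q_posdef
    {n m : ℕ} (B : Matrix (Fin n) (Fin m) ℝ)
    (Q : Matrix (Fin n) (Fin n) ℝ) (R : Matrix (Fin m) (Fin m) ℝ)
    (q : Fin n → ℝ) (r : Fin m → ℝ)
    (hQsym : Qᵀ = Q)
    (P : Matrix (Fin n) (Fin n) ℝ) (p : Fin n → ℝ)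
    (xs : Fin n → ℝ) (us : Fin m → ℝ) (hsteady : B.mulVec us = 0)
    (ℓ : (Fin n → ℝ) → (Fin m → ℝ) → ℝ)
    (hℓ : ∀ x u, ℓ x u = x ⬝ᵥ Q.mulVec x + u ⬝ᵥ R.mulVec u + q ⬝ᵥ x + r ⬝ᵥ u)
    (lam : (Fin n → ℝ) → ℝ)
    (hlam : ∀ x, lam x = x ⬝ᵥ P.mulVec x + p ⬝ᵥ x)
    (ℓtil : (Fin n → ℝ) → (Fin m → ℝ) → ℝ)
    (hℓtil : ∀ x u, ℓtil x u = ℓ x u - ℓ xs us + lam x - lam (x + B.mulVec u))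
    (α : ℝ → ℝ)
    (hα0 : α 0 = 0)
    (hαmono : StrictMonoOn α (Set.Ici (0 : ℝ)))
    (hαcont : ContinuousOn α (Set.Ici (0 : ℝ)))
    (hαunb : ∀ c : ℝ, ∃ s ≥ (0 : ℝ), c < α s)
    (S : Set (Fin n → ℝ)) (hxs : xs ∈ interior S)
    (hbound : ∀ x ∈ S, α ‖x - xs‖ ≤ ℓtil x us) :
    Q.PosDef := by
  have hαpos : ∀ s : ℝ, 0 < s → 0 < α s := by
    intro s hs
    have := hαmono Set.self_mem_Ici (Set.mem_Ici.mpr hs.le) hs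
    simpa [hα0] using this
  obtain ⟨ε, hε, hball⟩ : ∃ ε > 0, Metric.ball xs ε ⊆ S := by
    rcases Metric.mem_nhds_iff.mp (mem_interior_iff_mem_nhds.mp hxs) with ⟨ε, hε, hb⟩
    exact ⟨ε, hε, hb⟩
  have hsimp : ∀ x, ℓtil x us
      = x ⬝ᵥ Q.mulVec x - xs ⬝ᵥ Q.mulVec xs + (q ⬝ᵥ x - q ⬝ᵥ xs) := by
    intro x
    rw [hℓtil, hℓ, hℓ, hlam, hlam, hsteady]
    simp only [add_zero]
    ring
  rw [Matrix.posDef_iff_dotProduct_mulVec]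
  constructor
  · show Qᴴ = Q
    ext i j
    simp only [Matrix.conjTranspose_apply, star_trivial]
    exact congrFun (congrFun hQsym i) j
  · intro v hv
    have hvnorm : (0:ℝ) < ‖v‖ := norm_pos_iff.mpr hv
    set t := ε / (2 * ‖v‖) with ht
    have htpos : 0 < t := by positivity
    have htv : t * ‖v‖ = ε / 2 := by
      rw [ht]
      field_simp [hvnorm.ne']
    have hnorm1 : ‖(xs + t • v) - xs‖ = t * ‖v‖ := by
      have : (xs + t • v) - xs = t • v := by abel
      rw [this, norm_smul, Real.norm_eq_abs, abs_of_pos htpos]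
    have hnorm2 : ‖(xs - t • v) - xs‖ = t * ‖v‖ := by
      have : (xs - t • v) - xs = -(t • v) := by abel
      rw [this, norm_neg, norm_smul, Real.norm_eq_abs, abs_of_pos htpos]
    have hmem1 : xs + t • v ∈ S := by
      apply hball
      rw [Metric.mem_ball, dist_eq_norm, hnorm1, htv]
      linarith
    have hmem2 : xs - t • v ∈ S := by
      apply hball
      rw [Metric.mem_ball, dist_eq_norm, hnorm2, htv]
      linarith
    have h1 := hbound _ hmem1
    have h2 := hbound _ hmem2
    have hα1 : 0 < α ‖(xs + t • v) - xs‖ := by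
      apply hαpos
      rw [hnorm1]; positivity
    have hα2 : 0 < α ‖(xs - t • v) - xs‖ := by
      apply hαpos
      rw [hnorm2]; positivity
    have hsum : ℓtil (xs + t • v) us + ℓtil (xs - t • v) us
        = 2 * t ^ 2 * (v ⬝ᵥ Q.mulVec v) := by
      rw [hsimp, hsimp]
      simp only [Matrix.mulVec_add, Matrix.mulVec_sub, Matrix.mulVec_smul,
        dotProduct_add, dotProduct_sub, add_dotProduct, sub_dotProduct,
        smul_dotProduct, dotProduct_smul, smul_eq_mul]
      ring
    have hd : 0 < v ⬝ᵥ Q.mulVec v := by nlinarith [sq_nonneg t]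
    simpa using hd
end

section
/- Conversely, for x(t+1) = x(t) + B u(t) with stage cost ℓ(x,u) = xᵀQx + uᵀRu + qᵀx + rᵀu, Q ≻ 0, and steady-state pair (x_s, u_s) minimizing ℓ over steady states in the constraint set, there exists a linear storage function λ(x) = pᵀx such that the strict dissipation inequality λ(x + Bu) − λ(x) ≤ −α(‖x − x_s‖) + ℓ(x,u) − ℓ(x_s, u_s) holds for all feasible (x,u), with α(r) = λ_min(Q) r², provided (x_s, u_s) is an unconstrained minimizer of the rotated cost (e.g., it lies in the interior of the constraints and satisfies the first-order optimality conditions of minimizing ℓ(x,u) subject to Bu = 0). -/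
open Matrix


private lemma spectral_bound' {n : ℕ} (Q : Matrix (Fin n) (Fin n) ℝ) (hQ : Q.IsHermitian)
    (v : Fin n → ℝ) : (⨅ i, hQ.eigenvalues i) * (v ⬝ᵥ v) ≤ v ⬝ᵥ Q.mulVec v := by
  rcases Nat.eq_zero_or_pos n with h0 | hpos
  · subst h0; simp [dotProduct]
  have : Nonempty (Fin n) := ⟨⟨0, hpos⟩⟩
  set U : Matrix (Fin n) (Fin n) ℝ := (hQ.eigenvectorUnitary : Matrix (Fin n) (Fin n) ℝ) with hU
  set w : Fin n → ℝ := (star U) *ᵥ v with hw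
  have hsp := hQ.spectral_theorem
  have hUU : U * star U = 1 := Matrix.mem_unitaryGroup_iff.mp hQ.eigenvectorUnitary.2
  have hstar : star U = Uᵀ := by
    ext i j; simp [Matrix.star_eq_conjTranspose, Matrix.conjTranspose_apply]
  have hvm : ∀ z : Fin n → ℝ, v ⬝ᵥ (U *ᵥ z) = w ⬝ᵥ z := by
    intro z; rw [dotProduct_mulVec, hw, hstar, mulVec_transpose]
  have key1 : v ⬝ᵥ Q.mulVec v = ∑ i, hQ.eigenvalues i * (w i)^2 := by
    conv_lhs => rw [hsp, Unitary.conjStarAlgAut_apply]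
    rw [← hU, ← mulVec_mulVec, ← mulVec_mulVec, hvm, ← hw]
    simp only [dotProduct, mulVec_diagonal, Function.comp_apply, RCLike.ofReal_real_eq_id, id_eq]
    exact Finset.sum_congr rfl fun i _ => by ring
  have key2 : v ⬝ᵥ v = ∑ i, (w i)^2 := by
    have h2 : v ⬝ᵥ v = w ⬝ᵥ w := by rw [hw, ← hvm, mulVec_mulVec, hUU, one_mulVec]
    rw [h2]; simp [dotProduct, sq]
  rw [key1, key2, Finset.mul_sum]
  refine Finset.sum_le_sum fun i _ => ?_
  have hle : (⨅ j, hQ.eigenvalues j) ≤ hQ.eigenvalues i :=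
    ciInf_le (Set.Finite.bddBelow (Set.finite_range _)) i
  nlinarith [sq_nonneg (w i)]

private lemma quad_key' {n : ℕ} (Q : Matrix (Fin n) (Fin n) ℝ) (q : Fin n → ℝ)
    (a c : Fin n → ℝ) (t : ℝ) :
    (a + t • c) ⬝ᵥ Q.mulVec (a + t • c) + q ⬝ᵥ (a + t • c)
      = a ⬝ᵥ Q.mulVec a + q ⬝ᵥ a + t^2 * (c ⬝ᵥ Q.mulVec c)
        + t * (a ⬝ᵥ Q.mulVec c + c ⬝ᵥ Q.mulVec a + q ⬝ᵥ c) := by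
  simp only [mulVec_add, mulVec_smul, dotProduct_add, add_dotProduct, dotProduct_smul,
    smul_dotProduct, smul_eq_mul]
  ring

private lemma quad_diff' {n : ℕ} (Q : Matrix (Fin n) (Fin n) ℝ) (q : Fin n → ℝ)
    (a c : Fin n → ℝ) :
    c ⬝ᵥ Q.mulVec c + q ⬝ᵥ c
      = a ⬝ᵥ Q.mulVec a + q ⬝ᵥ a + (c - a) ⬝ᵥ Q.mulVec (c - a)
        + (a ⬝ᵥ Q.mulVec (c - a) + (c - a) ⬝ᵥ Q.mulVec a + q ⬝ᵥ (c - a)) := by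
  simp only [mulVec_sub, dotProduct_sub, sub_dotProduct, mulVec_add, dotProduct_add,
    add_dotProduct]
  ring

/-- If `Q ≻ 0` and `(x_s, u_s)` is a steady state that is an
unconstrained minimizer of the rotated cost built from a linear storage
`λ(x) = pᵀx`, then the strict dissipation inequality holds with
`α(r) = λ_min(Q) r²`. -/
theorem linear_storage_strict_dissipativity
    {n m : ℕ} (B : Matrix (Fin n) (Fin m) ℝ)
    (Q : Matrix (Fin n) (Fin n) ℝ) (R : Matrix (Fin m) (Fin m) ℝ)
    (q : Fin n → ℝ) (r : Fin m → ℝ)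
    (hQ : Q.IsHermitian) (hQpd : Q.PosDef)
    (X : Set (EuclideanSpace ℝ (Fin n))) (U : Set (Fin m → ℝ))
    (xs : EuclideanSpace ℝ (Fin n)) (us : Fin m → ℝ)
    (hsteady : B.mulVec us = 0)
    (ℓ : EuclideanSpace ℝ (Fin n) → (Fin m → ℝ) → ℝ)
    (hℓ : ∀ x u, ℓ x u = x ⬝ᵥ Q.mulVec x + u ⬝ᵥ R.mulVec u + q ⬝ᵥ x + r ⬝ᵥ u)
    (p : Fin n → ℝ)
    (lam : EuclideanSpace ℝ (Fin n) → ℝ)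
    (hlam : ∀ x, lam x = p ⬝ᵥ x)
    -- (x_s, u_s) is a global unconstrained minimizer of the rotated cost:
    (hmin : ∀ (x : EuclideanSpace ℝ (Fin n)) (u : Fin m → ℝ),
      ℓ xs us - ℓ xs us + lam xs - lam (xs + (WithLp.equiv 2 (Fin n → ℝ)).symm (B.mulVec us)) ≤
        ℓ x u - ℓ xs us + lam x - lam (x + (WithLp.equiv 2 (Fin n → ℝ)).symm (B.mulVec u)))
    (μ : ℝ) (hμ : μ = ⨅ i, hQ.eigenvalues i) :
    ∀ x ∈ X, ∀ u ∈ U,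
      lam (x + (WithLp.equiv 2 (Fin n → ℝ)).symm (B.mulVec u)) - lam x ≤ -(μ * ‖x - xs‖ ^ 2) + ℓ x u - ℓ xs us := by
  intro x _ u _
  have hsplit : ∀ (y : EuclideanSpace ℝ (Fin n)) (w : Fin n → ℝ),
      p ⬝ᵥ (y + (WithLp.equiv 2 (Fin n → ℝ)).symm w) = p ⬝ᵥ y + p ⬝ᵥ w :=
    fun y w => dotProduct_add p y w
  have hBus : (WithLp.equiv 2 (Fin n → ℝ)).symm (B.mulVec us) = 0 := by rw [hsteady]; simp
  -- g is globally minimized at xs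
  have hg : ∀ y : EuclideanSpace ℝ (Fin n),
      xs ⬝ᵥ Q.mulVec xs + q ⬝ᵥ xs ≤ y ⬝ᵥ Q.mulVec y + q ⬝ᵥ y := by
    intro y
    have h := hmin y us
    rw [hBus] at h
    simp only [hℓ, hlam, add_zero] at h
    linarith
  -- the linear coefficient vanishes
  have hquad : ∀ t : ℝ,
      0 ≤ t^2 * ((x - xs : Fin n → ℝ) ⬝ᵥ Q.mulVec (x - xs))
        + t * (xs ⬝ᵥ Q.mulVec ((x - xs : Fin n → ℝ)) + (x - xs : Fin n → ℝ) ⬝ᵥ Q.mulVec xs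
            + q ⬝ᵥ ((x - xs : Fin n → ℝ))) := by
    intro t
    have h := hg (xs + t • (x - xs))
    have he := quad_key' Q q xs (x - xs : Fin n → ℝ) t
    simp only [WithLp.ofLp_add, WithLp.ofLp_smul, WithLp.ofLp_sub] at h
    linarith [h, he]
  have ha : 0 ≤ (x - xs : Fin n → ℝ) ⬝ᵥ Q.mulVec (x - xs) := by
    simpa using hQpd.posSemidef.dotProduct_mulVec_nonneg ((x - xs : Fin n → ℝ))
  have hb : xs ⬝ᵥ Q.mulVec ((x - xs : Fin n → ℝ)) + (x - xs : Fin n → ℝ) ⬝ᵥ Q.mulVec xs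
      + q ⬝ᵥ ((x - xs : Fin n → ℝ)) = 0 := by
    set a := (x - xs : Fin n → ℝ) ⬝ᵥ Q.mulVec (x - xs) with hadef
    set b := xs ⬝ᵥ Q.mulVec ((x - xs : Fin n → ℝ)) + (x - xs : Fin n → ℝ) ⬝ᵥ Q.mulVec xs
      + q ⬝ᵥ ((x - xs : Fin n → ℝ)) with hbdef
    rcases ha.eq_or_lt with h0 | hpos
    · have h1 := hquad 1
      have h2 := hquad (-1)
      nlinarith
    · have h := hquad (-b / (2 * a))
      have e : (-b/(2*a))^2 * a + (-b/(2*a)) * b = -(b^2) / (4*a) := by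
        field_simp
        ring
      rw [e, le_div_iff₀ (by positivity)] at h
      have hb2 : b ^ 2 = 0 := le_antisymm (by linarith) (sq_nonneg b)
      exact pow_eq_zero_iff two_ne_zero |>.mp hb2
  -- dissipation for the u-part
  have hDu : p ⬝ᵥ B.mulVec u
      ≤ u ⬝ᵥ R.mulVec u + r ⬝ᵥ u - (us ⬝ᵥ R.mulVec us + r ⬝ᵥ us) := by
    have h := hmin xs u
    rw [hBus] at h
    simp only [hℓ, hlam, add_zero, hsplit, WithLp.ofLp_add, WithLp.equiv_symm_apply, WithLp.ofLp_toLp, dotProduct_add] at h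
    linarith
  -- spectral bound
  have hspec : μ * ((x - xs : Fin n → ℝ) ⬝ᵥ (x - xs : Fin n → ℝ))
      ≤ (x - xs : Fin n → ℝ) ⬝ᵥ Q.mulVec (x - xs) := by
    rw [hμ]; exact spectral_bound' Q hQ _
  have hnorm : ‖x - xs‖ ^ 2 = (x - xs : Fin n → ℝ) ⬝ᵥ (x - xs : Fin n → ℝ) := by
    rw [← real_inner_self_eq_norm_sq]
    simp only [PiLp.inner_apply, RCLike.inner_apply, conj_trivial, dotProduct, PiLp.sub_apply, WithLp.ofLp_sub, Pi.sub_apply]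
  have hx1 := quad_diff' Q q xs x
  simp only [hlam, hℓ, hsplit, hnorm, WithLp.ofLp_add, WithLp.equiv_symm_apply, WithLp.ofLp_toLp, dotProduct_add]
  linarith [hDu, hspec, hx1, hb]
end
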